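/- arXiv:2402.14791 — 2 statements merged into one kernel-verified Lean document; each statement's English description precedes it below -/
import Mathlib

section
/- Let H be a finite-dimensional complex inner product space, ψ ∈ H a unit vector, and Π : H → H an orthogonal projection (a self-adjoint idempotent linear map). Define the reflections R_ψ = I − 2⟨ψ,·⟩ψ and R_Π = I − 2Π, and the walk operator W = −R_ψ R_Π. Then for every natural number μ, ‖Π(W^μ ψ)‖² = sin²((2μ+1)·arcsin(‖Πψ‖)). -/
/-!
Write `θ = arcsin ‖Π ψ‖` and normalise the two components of `ψ`: `e₁ = ‖Π ψ‖⁻¹ • Π ψ` and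
`e₂ = ‖ψ - Π ψ‖⁻¹ • (ψ - Π ψ)`. Pythagoras gives `ψ = sin θ • e₁ + cos θ • e₂`, and since `W` is,
up to sign, the product of the reflections `R_ψ` and `R_Π`, it acts on `e₁, e₂` as the rotation
by `2θ`. So `W^μ ψ = sin ((2μ+1)θ) • e₁ + cos ((2μ+1)θ) • e₂`, and `Π` keeps the first term.
With the convention `0⁻¹ = 0` all of this holds verbatim when `Π ψ = 0` or `Π ψ = ψ`.
-/

open Real InnerProductSpace

section Rotation

variable {𝕜 M : Type*} [RCLike 𝕜] [AddCommGroup M] [Module 𝕜 M] {W : M →ₗ[𝕜] M} {e₁ e₂ : M}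
  {α : ℝ}

theorem apply_sin_smul_add_cos_smul_of_rotation
    (h₁ : W e₁ = (cos α : 𝕜) • e₁ - (sin α : 𝕜) • e₂)
    (h₂ : W e₂ = (sin α : 𝕜) • e₁ + (cos α : 𝕜) • e₂) (β : ℝ) :
    W ((sin β : 𝕜) • e₁ + (cos β : 𝕜) • e₂) =
      (sin (β + α) : 𝕜) • e₁ + (cos (β + α) : 𝕜) • e₂ := by
  rw [map_add, map_smul, map_smul, h₁, h₂, sin_add, cos_add]
  push_cast
  module

theorem pow_apply_sin_smul_add_cos_smul_of_rotation
    (h₁ : W e₁ = (cos α : 𝕜) • e₁ - (sin α : 𝕜) • e₂)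
    (h₂ : W e₂ = (sin α : 𝕜) • e₁ + (cos α : 𝕜) • e₂) (β : ℝ) (n : ℕ) :
    (W ^ n) ((sin β : 𝕜) • e₁ + (cos β : 𝕜) • e₂) =
      (sin (β + n * α) : 𝕜) • e₁ + (cos (β + n * α) : 𝕜) • e₂ := by
  induction n with
  | zero => simp
  | succ n ih =>
    rw [pow_succ', Module.End.mul_apply, ih, apply_sin_smul_add_cos_smul_of_rotation h₁ h₂,
      Nat.cast_succ, add_one_mul, ← add_assoc]

end Rotation

section InnerProductSpace

variable {𝕜 E : Type*} [RCLike 𝕜] [NormedAddCommGroup E] [InnerProductSpace 𝕜 E]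

theorem smul_inv_norm_smul (x : E) : (‖x‖ : 𝕜) • ((‖x‖⁻¹ : 𝕜) • x) = x := by
  rcases eq_or_ne x 0 with rfl | hx
  · simp
  · rw [smul_smul, mul_inv_cancel₀ (by simpa using hx), one_smul]

theorem inner_inv_norm_smul_of_inner_eq_norm_sq {x y : E} (h : ⟪x, y⟫_𝕜 = (‖y‖ : 𝕜) ^ 2) :
    ⟪x, (‖y‖⁻¹ : 𝕜) • y⟫_𝕜 = ‖y‖ := by
  rcases eq_or_ne y 0 with rfl | hy
  · simp
  · rw [inner_smul_right, h]
    field_simp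

namespace LinearMap.IsSymmetricProjection

variable {P : E →ₗ[𝕜] E}

theorem apply_apply (hP : P.IsSymmetricProjection) (x : E) : P (P x) = P x :=
  congrArg (· x) hP.isIdempotentElem.eq

theorem one_sub (hP : P.IsSymmetricProjection) : (1 - P).IsSymmetricProjection :=
  ⟨hP.isIdempotentElem.one_sub, IsSymmetric.one.sub hP.isSymmetric⟩

theorem inner_self_apply (hP : P.IsSymmetricProjection) (x : E) :
    ⟪x, P x⟫_𝕜 = (‖P x‖ : 𝕜) ^ 2 := by
  rw [← inner_self_eq_norm_sq_to_K, hP.isSymmetric, hP.apply_apply]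

theorem inner_apply_sub_self (hP : P.IsSymmetricProjection) (x : E) :
    ⟪P x, x - P x⟫_𝕜 = 0 := by
  rw [inner_sub_right, hP.isSymmetric, hP.inner_self_apply, inner_self_eq_norm_sq_to_K, sub_self]

theorem norm_apply_sq_add_norm_sub_apply_sq (hP : P.IsSymmetricProjection) (x : E) :
    ‖P x‖ ^ 2 + ‖x - P x‖ ^ 2 = ‖x‖ ^ 2 := by
  rw [sq, sq, ← norm_add_sq_eq_norm_sq_add_norm_sq_of_inner_eq_zero _ _ (hP.inner_apply_sub_self x),
    add_sub_cancel, sq]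

end LinearMap.IsSymmetricProjection

section Grover

variable (ψ : E) (P : E →ₗ[𝕜] E)

noncomputable def groverWalk : E →ₗ[𝕜] E :=
  -((LinearMap.id - (2 : 𝕜) • (rankOne 𝕜 ψ ψ : E →ₗ[𝕜] E)) ∘ₗ (LinearMap.id - (2 : 𝕜) • P))

variable {ψ P}

theorem groverWalk_apply_of_apply_eq_self {x : E} (hx : P x = x) :
    groverWalk ψ P x = x - (2 * ⟪ψ, x⟫_𝕜) • ψ := by
  simp only [groverWalk, LinearMap.neg_apply, LinearMap.comp_apply, LinearMap.sub_apply,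
    LinearMap.smul_apply, LinearMap.id_apply, ContinuousLinearMap.coe_coe, rankOne_apply, hx,
    inner_sub_right, inner_smul_right]
  module

theorem groverWalk_apply_of_apply_eq_zero {x : E} (hx : P x = 0) :
    groverWalk ψ P x = (2 * ⟪ψ, x⟫_𝕜) • ψ - x := by
  simp only [groverWalk, LinearMap.neg_apply, LinearMap.comp_apply, LinearMap.sub_apply,
    LinearMap.smul_apply, LinearMap.id_apply, ContinuousLinearMap.coe_coe, rankOne_apply, hx,
    smul_zero, sub_zero]
  module

theorem groverWalk_pow_apply_of_eq_sin_smul_add_cos_smul {e₁ e₂ : E} {θ : ℝ}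
    (hψ : ψ = (sin θ : 𝕜) • e₁ + (cos θ : 𝕜) • e₂) (he₁ : P e₁ = e₁) (he₂ : P e₂ = 0)
    (hψe₁ : ⟪ψ, e₁⟫_𝕜 = sin θ) (hψe₂ : ⟪ψ, e₂⟫_𝕜 = cos θ) (n : ℕ) :
    (groverWalk ψ P ^ n) ψ =
      (sin ((2 * n + 1) * θ) : 𝕜) • e₁ + (cos ((2 * n + 1) * θ) : 𝕜) • e₂ := by
  set W := groverWalk ψ P
  have hWe₁ : W e₁ = (cos (2 * θ) : 𝕜) • e₁ - (sin (2 * θ) : 𝕜) • e₂ := by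
    rw [groverWalk_apply_of_apply_eq_self he₁, hψe₁, hψ, cos_two_mul_eq_one_sub, sin_two_mul]
    push_cast
    module
  have hWe₂ : W e₂ = (sin (2 * θ) : 𝕜) • e₁ + (cos (2 * θ) : 𝕜) • e₂ := by
    rw [groverWalk_apply_of_apply_eq_zero he₂, hψe₂, hψ, cos_two_mul, sin_two_mul]
    push_cast
    module
  rw [hψ, pow_apply_sin_smul_add_cos_smul_of_rotation hWe₁ hWe₂,
    show θ + n * (2 * θ) = (2 * n + 1) * θ by ring]

theorem groverWalk_pow_apply (hψ : ‖ψ‖ = 1) (hP : P.IsSymmetricProjection) (n : ℕ) :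
    (groverWalk ψ P ^ n) ψ =
      (sin ((2 * n + 1) * arcsin ‖P ψ‖) : 𝕜) • ((‖P ψ‖⁻¹ : 𝕜) • P ψ) +
        (cos ((2 * n + 1) * arcsin ‖P ψ‖) : 𝕜) • ((‖ψ - P ψ‖⁻¹ : 𝕜) • (ψ - P ψ)) := by
  have hsq := hP.norm_apply_sq_add_norm_sub_apply_sq ψ
  rw [hψ, one_pow] at hsq
  have hsin : sin (arcsin ‖P ψ‖) = ‖P ψ‖ :=
    sin_arcsin (by linarith [norm_nonneg (P ψ)]) (by nlinarith [norm_nonneg (ψ - P ψ)])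
  have hcos : cos (arcsin ‖P ψ‖) = ‖ψ - P ψ‖ := by
    rw [cos_arcsin, show 1 - ‖P ψ‖ ^ 2 = ‖ψ - P ψ‖ ^ 2 by linarith, sqrt_sq (norm_nonneg _)]
  apply groverWalk_pow_apply_of_eq_sin_smul_add_cos_smul
  · rw [hsin, hcos, smul_inv_norm_smul, smul_inv_norm_smul, add_sub_cancel]
  · rw [map_smul, hP.apply_apply]
  · rw [map_smul, map_sub, hP.apply_apply, sub_self, smul_zero]
  · rw [hsin]
    exact inner_inv_norm_smul_of_inner_eq_norm_sq (hP.inner_self_apply ψ)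
  · rw [hcos]
    exact inner_inv_norm_smul_of_inner_eq_norm_sq (by simpa using hP.one_sub.inner_self_apply ψ)

end Grover

end InnerProductSpace

theorem amplitude_amplification_success_probability_general
    {H : Type*} [NormedAddCommGroup H] [InnerProductSpace ℂ H]
    (ψ : H) (hψ : ‖ψ‖ = 1)
    (P : H →ₗ[ℂ] H) (hsa : P.IsSymmetric) (hidem : P ∘ₗ P = P)
    (Rψ RP W : H →ₗ[ℂ] H)
    (hRψ : ∀ x : H, Rψ x = x - (2 : ℂ) • ((inner ℂ ψ x : ℂ) • ψ))
    (hRP : RP = LinearMap.id - (2 : ℂ) • P)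
    (hW : W = -(Rψ ∘ₗ RP)) (μ : ℕ) :
    ‖P ((W ^ μ) ψ)‖ ^ 2 = Real.sin ((2 * (μ : ℝ) + 1) * Real.arcsin ‖P ψ‖) ^ 2 := by
  have hP : P.IsSymmetricProjection := ⟨hidem, hsa⟩
  have hW' : W = groverWalk ψ P := by
    subst hW hRP
    ext x
    simp [groverWalk, hRψ, inner_sub_right, inner_smul_right]
  rw [hW', groverWalk_pow_apply hψ hP, map_add, map_smul, map_smul, map_smul, map_smul,
    hP.apply_apply, map_sub, hP.apply_apply, sub_self, smul_zero, smul_zero, add_zero]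
  rcases eq_or_ne (P ψ) 0 with h | h
  · simp [h]
  · rw [norm_smul, norm_smul_inv_norm h, mul_one, RCLike.norm_ofReal, sq_abs]

/-- Exact success-probability formula for `μ` rounds of amplitude amplification:
`‖Π (W^μ ψ)‖² = sin²((2μ+1)·arcsin ‖Π ψ‖)`. -/
theorem amplitude_amplification_success_probability
    {H : Type*} [NormedAddCommGroup H] [InnerProductSpace ℂ H] [FiniteDimensional ℂ H]
    (ψ : H) (hψ : ‖ψ‖ = 1)
    (P : H →ₗ[ℂ] H) (hsa : P.IsSymmetric) (hidem : P ∘ₗ P = P)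
    (Rψ RP W : H →ₗ[ℂ] H)
    (hRψ : ∀ x : H, Rψ x = x - (2 : ℂ) • ((inner ℂ ψ x : ℂ) • ψ))
    (hRP : RP = LinearMap.id - (2 : ℂ) • P)
    (hW : W = -(Rψ ∘ₗ RP)) (μ : ℕ) :
    ‖P ((W ^ μ) ψ)‖ ^ 2 = Real.sin ((2 * (μ : ℝ) + 1) * Real.arcsin ‖P ψ‖) ^ 2 :=
  amplitude_amplification_success_probability_general ψ hψ P hsa hidem Rψ RP W hRψ hRP hW μ
end

section
/- Fix P₀ ∈ (0,1) and define g : (0,1) → ℝ by g(q) = sin²((2/π)·arcsin(√q)·arcsin(√P₀)). Then for all real a, b with 0 < a ≤ b < 1, the function g is Lipschitz on [a, b] with Lipschitz constant arcsin(√P₀) / (π·√(a(1−b))); that is, for all q₁, q₂ ∈ [a,b], |g(q₁) − g(q₂)| ≤ (arcsin(√P₀) / (π·√(a(1−b)))) · |q₁ − q₂|. -/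
open Real Set

/-!
With `c = 2 arcsin √P₀ / π`, the map is `q ↦ sin² (c · arcsin √q)`, whose derivative is
`c · sin (2c · arcsin √q) / (2 √(q (1 - q)))`. On `[a, b]` we have `q (1 - q) ≥ a (1 - b)`,
so the derivative is bounded by `|c| / (2 √(a (1 - b)))`, and the mean value inequality concludes.
-/

theorem hasDerivAt_arcsin_sqrt {x : ℝ} (hx₀ : 0 < x) (hx₁ : x < 1) :
    HasDerivAt (fun q => arcsin √q) (1 / (2 * √(x * (1 - x)))) x := by
  have hsqrt_lt : √x < 1 := (sqrt_lt' one_pos).2 (by rwa [one_pow])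
  refine ((hasDerivAt_arcsin (by linarith [sqrt_nonneg x]) hsqrt_lt.ne).comp x
    (hasDerivAt_sqrt hx₀.ne')).congr_deriv ?_
  rw [sq_sqrt hx₀.le, sqrt_mul hx₀.le]
  field_simp

theorem hasDerivAt_sin_sq (y : ℝ) : HasDerivAt (fun y => sin y ^ 2) (sin (2 * y)) y := by
  refine ((hasDerivAt_sin y).fun_pow 2).congr_deriv ?_
  rw [sin_two_mul]
  ring

theorem hasDerivAt_sin_sq_mul_arcsin_sqrt (c : ℝ) {x : ℝ} (hx₀ : 0 < x) (hx₁ : x < 1) :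
    HasDerivAt (fun q => sin (c * arcsin √q) ^ 2)
      (sin (2 * (c * arcsin √x)) * (c / (2 * √(x * (1 - x))))) x := by
  refine ((hasDerivAt_sin_sq _).comp x
    ((hasDerivAt_arcsin_sqrt hx₀ hx₁).const_mul c)).congr_deriv ?_
  ring

theorem sqrt_mul_one_sub_le_of_mem_Icc {a b x : ℝ} (ha : 0 ≤ a) (hb : b ≤ 1) (hx : x ∈ Icc a b) :
    √(a * (1 - b)) ≤ √(x * (1 - x)) :=
  sqrt_le_sqrt (mul_le_mul hx.1 (by linarith [hx.2]) (by linarith [hx.2]) (ha.trans hx.1))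

theorem abs_sin_sq_mul_arcsin_sqrt_sub_le (c : ℝ) {a b : ℝ} (ha : 0 < a) (hb : b < 1)
    {q₁ q₂ : ℝ} (hq₁ : q₁ ∈ Icc a b) (hq₂ : q₂ ∈ Icc a b) :
    |sin (c * arcsin √q₁) ^ 2 - sin (c * arcsin √q₂) ^ 2|
      ≤ |c| / (2 * √(a * (1 - b))) * |q₁ - q₂| := by
  have hderiv : ∀ x ∈ Icc a b, HasDerivWithinAt (fun q => sin (c * arcsin √q) ^ 2)
      (sin (2 * (c * arcsin √x)) * (c / (2 * √(x * (1 - x))))) (Icc a b) x := fun x hx =>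
    (hasDerivAt_sin_sq_mul_arcsin_sqrt c (ha.trans_le hx.1) (hx.2.trans_lt hb)).hasDerivWithinAt
  have hbound : ∀ x ∈ Icc a b,
      ‖sin (2 * (c * arcsin √x)) * (c / (2 * √(x * (1 - x))))‖ ≤ |c| / (2 * √(a * (1 - b))) := by
    intro x hx
    have hx_pos : 0 < x * (1 - x) := mul_pos (ha.trans_le hx.1) (by linarith [hx.2])
    rw [norm_mul, norm_div, Real.norm_eq_abs, Real.norm_eq_abs, Real.norm_eq_abs,
      abs_of_pos (by positivity : 0 < 2 * √(x * (1 - x)))]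
    calc |sin (2 * (c * arcsin √x))| * (|c| / (2 * √(x * (1 - x))))
        ≤ 1 * (|c| / (2 * √(x * (1 - x)))) := by gcongr; exact abs_sin_le_one _
      _ ≤ |c| / (2 * √(a * (1 - b))) := by
        rw [one_mul]
        gcongr |c| / (2 * ?_)
        exact sqrt_mul_one_sub_le_of_mem_Icc ha.le hb.le hx
  simpa only [Real.norm_eq_abs] using
    (convex_Icc a b).norm_image_sub_le_of_norm_hasDerivWithin_le hderiv hbound hq₂ hq₁

theorem aae_postprocessing_lipschitz_general
    (P₀ : ℝ) (a b : ℝ)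
    (ha : 0 < a) (hb : b < 1) :
    ∀ q₁ ∈ Set.Icc a b, ∀ q₂ ∈ Set.Icc a b,
      |Real.sin ((2 / Real.pi) * Real.arcsin (Real.sqrt q₁) * Real.arcsin (Real.sqrt P₀)) ^ 2 -
          Real.sin ((2 / Real.pi) * Real.arcsin (Real.sqrt q₂) * Real.arcsin (Real.sqrt P₀)) ^ 2|
        ≤ (Real.arcsin (Real.sqrt P₀) / (Real.pi * Real.sqrt (a * (1 - b)))) * |q₁ - q₂| := by
  intro q₁ hq₁ q₂ hq₂
  set c := 2 / π * arcsin √P₀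
  have hc : |c| / 2 = arcsin √P₀ / π := by
    rw [abs_of_nonneg (mul_nonneg (div_nonneg zero_le_two pi_pos.le)
      (arcsin_nonneg.2 (sqrt_nonneg P₀)))]
    ring
  have key := abs_sin_sq_mul_arcsin_sqrt_sub_le c ha hb hq₁ hq₂
  rw [div_mul_eq_div_div, hc, div_div] at key
  simpa only [mul_right_comm (2 / π)] using key

/-- Lipschitz bound for the amplified amplitude estimation post-processing map
`g(q) = sin²((2/π)·arcsin √q · arcsin √P₀)` on `[a, b] ⊆ (0,1)`, with Lipschitz constant
`arcsin(√P₀)/(π·√(a(1−b)))`. -/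
theorem aae_postprocessing_lipschitz
    (P₀ : ℝ) (hP₀ : P₀ ∈ Set.Ioo (0 : ℝ) 1) (a b : ℝ)
    (ha : 0 < a) (hab : a ≤ b) (hb : b < 1) :
    ∀ q₁ ∈ Set.Icc a b, ∀ q₂ ∈ Set.Icc a b,
      |Real.sin ((2 / Real.pi) * Real.arcsin (Real.sqrt q₁) * Real.arcsin (Real.sqrt P₀)) ^ 2 -
          Real.sin ((2 / Real.pi) * Real.arcsin (Real.sqrt q₂) * Real.arcsin (Real.sqrt P₀)) ^ 2|
        ≤ (Real.arcsin (Real.sqrt P₀) / (Real.pi * Real.sqrt (a * (1 - b)))) * |q₁ - q₂| :=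
  aae_postprocessing_lipschitz_general P₀ a b ha hb
end
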